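/- arXiv:1510.08154 — 5 statements merged into one kernel-verified Lean document; each statement's English description precedes it below -/
import Mathlib

section
/- Let G be a simple graph with no induced C4 and no induced diamond, and suppose C1, C2, C3 are three pairwise distinct maximal cliques of G such that C1 ∩ C2 = {u}, C2 ∩ C3 = {v}, C1 ∩ C3 = {w} with u, v, w distinct. If C1 contains a vertex x not in {u,v,w}, then {x, u, v, w} induces a diamond in G, a contradiction; hence C1 = {u,w}, C2 = {u,v}, and C3 = {v,w}, and then {u,v,w} is a triangle contradicting maximality of C1. Therefore no such configuration of three maximal cliques pairwise intersecting in three distinct vertices exists in G. -/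
/-- `{a,b,c,d}` induce a C4 in `G` (cycle a-b-c-d-a, with chords absent). -/
def IsInducedC4 {V : Type*} (G : SimpleGraph V) (a b c d : V) : Prop :=
  a ≠ b ∧ a ≠ c ∧ a ≠ d ∧ b ≠ c ∧ b ≠ d ∧ c ≠ d ∧
  G.Adj a b ∧ G.Adj b c ∧ G.Adj c d ∧ G.Adj d a ∧ ¬ G.Adj a c ∧ ¬ G.Adj b d

/-- `{a,b,c,d}` induce a diamond (K4 minus the edge bd) in `G`. -/
def IsInducedDiamond {V : Type*} (G : SimpleGraph V) (a b c d : V) : Prop :=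
  a ≠ b ∧ a ≠ c ∧ a ≠ d ∧ b ≠ c ∧ b ≠ d ∧ c ≠ d ∧
  G.Adj a b ∧ G.Adj b c ∧ G.Adj c d ∧ G.Adj d a ∧ G.Adj a c ∧ ¬ G.Adj b d


theorem stmt_3 {V : Type*} [Fintype V] (G : SimpleGraph V)
    (hC4 : ∀ a b c d : V, ¬ IsInducedC4 G a b c d)
    (hD : ∀ a b c d : V, ¬ IsInducedDiamond G a b c d) :
    ¬ ∃ (C1 C2 C3 : Set V) (u v w : V),
        Maximal G.IsClique C1 ∧ Maximal G.IsClique C2 ∧ Maximal G.IsClique C3 ∧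
        C1 ≠ C2 ∧ C2 ≠ C3 ∧ C1 ≠ C3 ∧
        u ≠ v ∧ v ≠ w ∧ u ≠ w ∧
        C1 ∩ C2 = {u} ∧ C2 ∩ C3 = {v} ∧ C1 ∩ C3 = {w} := by
  rintro ⟨C1, C2, C3, u, v, w, h1, h2, h3, h12, h23, h13, huv, hvw, huw, i12, i23, i13⟩
  have hu12 : u ∈ C1 ∩ C2 := by rw [i12]; rfl
  have hv23 : v ∈ C2 ∩ C3 := by rw [i23]; rfl
  have hw13 : w ∈ C1 ∩ C3 := by rw [i13]; rfl
  have hu1 : u ∈ C1 := hu12.1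
  have hu2 : u ∈ C2 := hu12.2
  have hv2 : v ∈ C2 := hv23.1
  have hv3 : v ∈ C3 := hv23.2
  have hw1 : w ∈ C1 := hw13.1
  have hw3 : w ∈ C3 := hw13.2
  have auw : G.Adj u w := h1.1 hu1 hw1 huw
  have auv : G.Adj u v := h2.1 hu2 hv2 huv
  have avw : G.Adj v w := h3.1 hv3 hw3 hvw
  have hvC1 : v ∉ C1 := by
    intro hv1
    have : v ∈ C1 ∩ C2 := ⟨hv1, hv2⟩
    rw [i12] at this
    exact huv this.symm
  -- C1 ⊆ {u, w}
  have hsub : C1 ⊆ {u, w} := by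
    intro x hx1
    by_contra hx
    simp only [Set.mem_insert_iff, Set.mem_singleton_iff, not_or] at hx
    obtain ⟨hxu, hxw⟩ := hx
    have hxv : x ≠ v := fun h => hvC1 (h ▸ hx1)
    have axu : G.Adj x u := h1.1 hx1 hu1 hxu
    have axw : G.Adj x w := h1.1 hx1 hw1 hxw
    by_cases axv : G.Adj x v
    · -- x ∉ C2, find y ∈ C2 not adjacent to x
      have hxC2 : x ∉ C2 := by
        intro hx2
        have : x ∈ C1 ∩ C2 := ⟨hx1, hx2⟩
        rw [i12] at this
        exact hxu this
      have hy : ∃ y ∈ C2, y ≠ x ∧ ¬ G.Adj x y := by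
        by_contra hcon
        push_neg at hcon
        have hins : G.IsClique (insert x C2) :=
          h2.1.insert (fun b hb hbx => hcon b hb hbx.symm)
        have := h2.2 hins (Set.subset_insert x C2)
        exact hxC2 (this (Set.mem_insert x C2))
      obtain ⟨y, hy2, hyx, hnxy⟩ := hy
      have hyu : y ≠ u := fun h => hnxy (h ▸ axu)
      have hyv : y ≠ v := fun h => hnxy (h ▸ axv)
      have ayu : G.Adj u y := h2.1 hu2 hy2 (Ne.symm hyu)
      have ayv : G.Adj v y := h2.1 hv2 hy2 (Ne.symm hyv)
      exact hD u x v y ⟨Ne.symm hxu, huv, Ne.symm hyu,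
        hxv, Ne.symm hyx, Ne.symm hyv, axu.symm, axv, ayv, ayu.symm, auv, hnxy⟩
    · -- diamond u x w v
      exact hD u x w v ⟨Ne.symm hxu, huw, huv, hxw, hxv, Ne.symm hvw,
        axu.symm, axw, avw.symm, auv.symm, auw, axv⟩
  -- insert v into C1 is a clique, contradiction with maximality
  have hins : G.IsClique (insert v C1) := by
    apply h1.1.insert
    intro b hb hbv
    rcases hsub hb with h | h
    · rw [h]; exact auv.symm
    · rw [Set.mem_singleton_iff] at h
      rw [h]; exact avw
  have := h1.2 hins (Set.subset_insert v C1)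
  exact hvC1 (this (Set.mem_insert v C1))
end

section
/- Let G be a connected simple graph with no induced C4 and no induced diamond, let v be a vertex of G, and suppose C is a connected induced subgraph of G \ {v} such that the induced subgraph on V(C) ∪ {v} is a block graph. Then all neighbors of v inside C lie in a single block (maximal 2-connected subgraph) of C. -/
/-- `G` has an induced cycle of length at least 4. -/
def HasLongInducedCycle {V : Type*} (G : SimpleGraph V) : Prop :=
  ∃ (n : ℕ) (f : ZMod n → V), 4 ≤ n ∧ Function.Injective f ∧
    ∀ i j : ZMod n, G.Adj (f i) (f j) ↔ (j = i + 1 ∨ i = j + 1)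

/-- A block graph: no induced cycle of length ≥ 4 and no induced diamond. -/
def IsBlockGraph {V : Type*} (G : SimpleGraph V) : Prop :=
  ¬ HasLongInducedCycle G ∧ ∀ a b c d : V, ¬ IsInducedDiamond G a b c d

/-- `B` induces a (2-)connected subgraph of `G` with no cut vertex. -/
def IsBiconnectedSet {V : Type*} (G : SimpleGraph V) (B : Set V) : Prop :=
  (G.induce B).Connected ∧ ∀ x ∈ B, (G.induce (B \ {x})).Preconnected

private lemma exists_walk_getVert {V : Type*} {G : SimpleGraph V} {u v : V} (w : G.Walk u v) :
    ∀ i j : ℕ, i ≤ j → ∃ p : G.Walk (w.getVert i) (w.getVert j), p.length ≤ j - i := by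
  induction w with
  | nil => intro i j _; exact ⟨SimpleGraph.Walk.nil, by simp⟩
  | cons h q ih =>
    intro i j hij
    cases i with
    | zero =>
      cases j with
      | zero => exact ⟨SimpleGraph.Walk.nil, by simp⟩
      | succ j =>
        obtain ⟨p, hp⟩ := ih 0 j (Nat.zero_le j)
        exact ⟨SimpleGraph.Walk.cons h (p.copy (q.getVert_zero) rfl),
          (congrArg (· + 1) (SimpleGraph.Walk.length_copy p q.getVert_zero rfl)).trans_le (by omega)⟩
    | succ i =>
      cases j with
      | zero => omega
      | succ j => simpa using ih i j (by omega)

private lemma dist_getVert_le {V : Type*} {G : SimpleGraph V} {u v : V} (w : G.Walk u v)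
    {i j : ℕ} (hij : i ≤ j) : G.dist (w.getVert i) (w.getVert j) ≤ j - i := by
  obtain ⟨p, hp⟩ := exists_walk_getVert w i j hij
  exact (SimpleGraph.dist_le p).trans hp

private lemma neighbors_clique {V : Type*} (G : SimpleGraph V)
    (hC4 : ∀ a b c d : V, ¬ (a ≠ b ∧ a ≠ c ∧ a ≠ d ∧ b ≠ c ∧ b ≠ d ∧ c ≠ d ∧
      G.Adj a b ∧ G.Adj b c ∧ G.Adj c d ∧ G.Adj d a ∧ ¬ G.Adj a c ∧ ¬ G.Adj b d))
    (hD : ∀ a b c d : V, ¬ (a ≠ b ∧ a ≠ c ∧ a ≠ d ∧ b ≠ c ∧ b ≠ d ∧ c ≠ d ∧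
      G.Adj a b ∧ G.Adj b c ∧ G.Adj c d ∧ G.Adj d a ∧ G.Adj a c ∧ ¬ G.Adj b d))
    (v : V) (C : Set V) (hvC : v ∉ C)
    (hCconn : (G.induce C).Connected)
    (hcyc : ¬ HasLongInducedCycle (G.induce (C ∪ {v})))
    (a b : V) (ha : a ∈ C) (hb : b ∈ C) (hva : G.Adj v a) (hvb : G.Adj v b) :
    a = b ∨ G.Adj a b := by
  suffices H : ∀ n : ℕ, ∀ a b : V, ∀ ha : a ∈ C, ∀ hb : b ∈ C, G.Adj v a → G.Adj v b →
      (G.induce C).dist ⟨a, ha⟩ ⟨b, hb⟩ = n → a = b ∨ G.Adj a b by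
    exact H _ a b ha hb hva hvb rfl
  clear hva hvb ha hb a b
  intro n
  induction n using Nat.strong_induction_on with
  | _ n IH =>
  intro a b ha hb hva hvb hdist
  rcases n with _ | _ | k
  · left
    have := (hCconn.dist_eq_zero_iff).mp hdist
    exact congrArg Subtype.val this
  · right
    obtain ⟨w, hlen⟩ := (hCconn.preconnected ⟨a, ha⟩ ⟨b, hb⟩).exists_walk_length_eq_dist
    rw [hdist] at hlen
    have h01 := w.adj_getVert_succ (i := 0) (by omega)
    rw [w.getVert_zero, show w.getVert 1 = ⟨b, hb⟩ from w.getVert_of_length_le (by omega)]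
      at h01
    exact h01
  · -- main case : dist = k + 2
    obtain ⟨w, hlen⟩ := (hCconn.preconnected ⟨a, ha⟩ ⟨b, hb⟩).exists_walk_length_eq_dist
    rw [hdist] at hlen
    have hx0 : w.getVert 0 = ⟨a, ha⟩ := w.getVert_zero
    have hxK : w.getVert (k + 2) = ⟨b, hb⟩ := w.getVert_of_length_le (by omega)
    have hca : (↑(w.getVert 0) : V) = a := by rw [hx0]
    have hcb : (↑(w.getVert (k + 2)) : V) = b := by rw [hxK]
    have hdeq : ∀ i j, i ≤ j → j ≤ k + 2 →
        (G.induce C).dist (w.getVert i) (w.getVert j) = j - i := by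
      intro i j hij hjK
      have h1 := dist_getVert_le w hij
      have h2 := dist_getVert_le w (Nat.zero_le i)
      have h3 := dist_getVert_le w hjK
      rw [hx0] at h2
      rw [hxK] at h3
      have t1 : (G.induce C).dist ⟨a, ha⟩ ⟨b, hb⟩ ≤
          (G.induce C).dist ⟨a, ha⟩ (w.getVert j) + (G.induce C).dist (w.getVert j) ⟨b, hb⟩ :=
        hCconn.dist_triangle
      have t2 : (G.induce C).dist ⟨a, ha⟩ (w.getVert j) ≤
          (G.induce C).dist ⟨a, ha⟩ (w.getVert i) +
          (G.induce C).dist (w.getVert i) (w.getVert j) :=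
        hCconn.dist_triangle
      omega
    have hne : ∀ i j, i < j → j ≤ k + 2 → w.getVert i ≠ w.getVert j := by
      intro i j hij hjK h
      have h2 := hdeq i j hij.le hjK
      rw [h, SimpleGraph.dist_self] at h2
      omega
    have hcne : ∀ i j, i < j → j ≤ k + 2 → (↑(w.getVert i) : V) ≠ ↑(w.getVert j) :=
      fun i j h1 h2 h => hne i j h1 h2 (Subtype.ext h)
    have hnadj : ∀ i j, i + 2 ≤ j → j ≤ k + 2 → ¬ G.Adj ↑(w.getVert i) ↑(w.getVert j) := by
      intro i j hij hjK hadj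
      have hle := SimpleGraph.dist_le
        (SimpleGraph.Walk.cons hadj SimpleGraph.Walk.nil :
          (G.induce C).Walk (w.getVert i) (w.getVert j))
      have h2 := hdeq i j (by omega) hjK
      change _ ≤ 1 at hle
      omega
    have hadjsucc : ∀ i, i < k + 2 → G.Adj ↑(w.getVert i) ↑(w.getVert (i + 1)) := by
      intro i hi
      exact w.adj_getVert_succ (by omega)
    have hint : ∀ i, 0 < i → i < k + 2 → ¬ G.Adj v ↑(w.getVert i) := by
      intro i hi0 hiK hadj
      have hxC : (↑(w.getVert i) : V) ∈ C := (w.getVert i).2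
      have d1 : (G.induce C).dist ⟨a, ha⟩ ⟨↑(w.getVert i), hxC⟩ = i := by
        have h := hdeq 0 i (Nat.zero_le i) (by omega)
        rw [hx0] at h
        simp only [Nat.sub_zero] at h
        exact h
      rcases IH i (by omega) a ↑(w.getVert i) ha hxC hva hadj d1 with heq | hadj'
      · exact hne 0 i hi0 (by omega) (hx0.trans (Subtype.ext heq))
      · have hi1 : i = 1 := by
          by_contra h
          have h2 : ¬ G.Adj ↑(w.getVert 0) ↑(w.getVert i) := hnadj 0 i (by omega) (by omega)
          rw [hca] at h2
          exact h2 hadj'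
        have d2 : (G.induce C).dist ⟨↑(w.getVert i), hxC⟩ ⟨b, hb⟩ = k + 2 - i := by
          have h := hdeq i (k + 2) (by omega) le_rfl
          rw [hxK] at h
          exact h
        rcases IH (k + 2 - i) (by omega) (↑(w.getVert i)) b hxC hb hadj hvb d2 with heq2 | hadj2
        · exact hne i (k + 2) hiK le_rfl ((Subtype.ext heq2).trans hxK.symm)
        · have hik : i = k + 1 := by
            by_contra h
            have h2 : ¬ G.Adj ↑(w.getVert i) ↑(w.getVert (k + 2)) :=
              hnadj i (k + 2) (by omega) le_rfl
            rw [hcb] at h2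
            exact h2 hadj2
          -- i = 1 and i = k+1, so k = 0
          subst hi1
          have hab : a ≠ b := fun h =>
            hcne 0 (k + 2) (by omega) le_rfl (by rw [hca, hcb]; exact h)
          have hnab : ¬ G.Adj a b := fun h =>
            hnadj 0 (k + 2) (by omega) le_rfl (by rw [hca, hcb]; exact h)
          exact hD v a (↑(w.getVert 1)) b
            ⟨hva.ne, hadj.ne, hvb.ne, hadj'.ne, hab, hadj2.ne,
              hva, hadj', hadj2, hvb.symm, hadj, hnab⟩
    -- now v is adjacent to no internal vertex
    rcases Nat.eq_zero_or_pos k with hk0 | hkpos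
    · -- C4
      subst hk0
      have h01 : G.Adj a ↑(w.getVert 1) := by
        have h := hadjsucc 0 (by omega); rwa [hca] at h
      have h12 : G.Adj ↑(w.getVert 1) b := by
        have h := hadjsucc 1 (by omega); rwa [show ((1:ℕ)+1) = 0+2 from rfl, hcb] at h
      have hab : a ≠ b := fun h =>
        hcne 0 2 (by omega) le_rfl (by rw [hca, show ((2:ℕ)) = 0+2 from rfl, hcb]; exact h)
      have hnab : ¬ G.Adj a b := fun h =>
        hnadj 0 2 (by omega) le_rfl (by rw [hca, show ((2:ℕ)) = 0+2 from rfl, hcb]; exact h)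
      have hv1 : ¬ G.Adj v ↑(w.getVert 1) := hint 1 (by omega) (by omega)
      exact absurd ⟨hva.ne, fun h => hvC (h ▸ (w.getVert 1).2), hvb.ne,
        h01.ne, hab, h12.ne, hva, h01, h12, hvb.symm, hv1, hnab⟩ (hC4 v a (↑(w.getVert 1)) b)
    · -- long induced cycle of length k + 4
      exfalso
      apply hcyc
      haveI : NeZero (k + 4) := ⟨by omega⟩
      set g : ℕ → V := fun p => if p = 0 then v else ↑(w.getVert (p - 1)) with hg
      have hgS : ∀ p, g p ∈ C ∪ {v} := by
        intro p
        by_cases h : p = 0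
        · simp [hg, h]
        · simp only [hg, if_neg h]
          exact Or.inl (w.getVert (p - 1)).2
      have ginj : ∀ p q, p < k + 4 → q < k + 4 → g p = g q → p = q := by
        intro p q hp hq h
        rcases p with _ | s <;> rcases q with _ | t
        · rfl
        · have h' : v = ↑(w.getVert t) := by simpa [hg] using h
          exact absurd (by rw [h']; exact (w.getVert t).2) hvC
        · have h' : v = ↑(w.getVert s) := by simpa [hg] using h.symm
          exact absurd (by rw [h']; exact (w.getVert s).2) hvC
        · simp only [hg, Nat.succ_sub_one, if_neg (Nat.succ_ne_zero _)] at h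
          by_contra hc
          rcases Nat.lt_or_ge s t with h1 | h1
          · exact hcne s t h1 (by omega) h
          · exact hcne t s (by omega) (by omega) h.symm
      have hvx : ∀ t, t ≤ k + 2 → (G.Adj v ↑(w.getVert t) ↔ (t = 0 ∨ t = k + 2)) := by
        intro t ht
        constructor
        · intro hadj
          by_contra hcon
          push_neg at hcon
          exact hint t (by omega) (by omega) hadj
        · rintro (rfl | rfl)
          · rw [hca]; exact hva
          · rw [hcb]; exact hvb
      have hxadj : ∀ s t, s ≤ k + 2 → t ≤ k + 2 →
          (G.Adj ↑(w.getVert s) ↑(w.getVert t) ↔ (t = s + 1 ∨ s = t + 1)) := by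
        intro s t hs ht
        constructor
        · intro hadj
          rcases lt_trichotomy s t with h1 | h1 | h1
          · left; by_contra h2; exact hnadj s t (by omega) ht hadj
          · exact absurd rfl (h1 ▸ hadj).ne
          · right; by_contra h2; exact hnadj t s (by omega) hs hadj.symm
        · rintro (rfl | rfl)
          · exact hadjsucc s (by omega)
          · exact (hadjsucc t (by omega)).symm
      have hmod : ∀ p, p < k + 4 → (p + 1) % (k + 4) = if p = k + 3 then 0 else p + 1 := by
        intro p hp
        split
        · next h => rw [h]; exact Nat.mod_self _
        · next h => exact Nat.mod_eq_of_lt (by omega)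
      have main : ∀ p q, p < k + 4 → q < k + 4 →
          (G.Adj (g p) (g q) ↔ (q = (p + 1) % (k + 4) ∨ p = (q + 1) % (k + 4))) := by
        intro p q hp hq
        rw [hmod p hp, hmod q hq]
        rcases p with _ | s <;> rcases q with _ | t
        · simp only [hg, if_pos rfl]
          simp only [SimpleGraph.irrefl, false_iff]
          intro h
          rcases h with h | h <;> (split at h <;> omega)
        · simp only [hg, if_pos rfl, if_neg (Nat.succ_ne_zero t), Nat.succ_sub_one]
          rw [hvx t (by omega)]
          constructor
          · rintro (rfl | rfl) <;> [left; right] <;> (split <;> omega)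
          · rintro (h | h) <;> (split at h <;> omega)
        · simp only [hg, if_pos rfl, if_neg (Nat.succ_ne_zero s), Nat.succ_sub_one]
          rw [show G.Adj ↑(w.getVert s) v ↔ G.Adj v ↑(w.getVert s) from ⟨SimpleGraph.Adj.symm, SimpleGraph.Adj.symm⟩]
          rw [hvx s (by omega)]
          constructor
          · rintro (rfl | rfl) <;> [right; left] <;> (split <;> omega)
          · rintro (h | h) <;> (split at h <;> omega)
        · simp only [hg, if_neg (Nat.succ_ne_zero s), if_neg (Nat.succ_ne_zero t),
            Nat.succ_sub_one]
          rw [hxadj s t (by omega) (by omega)]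
          constructor
          · rintro (rfl | rfl) <;> [left; right] <;> (split <;> omega)
          · rintro (h | h) <;> (split at h <;> omega)
      refine ⟨k + 4, fun i => ⟨g i.val, hgS _⟩, by omega, ?_, ?_⟩
      · intro i j hij
        have h := congrArg Subtype.val hij
        exact ZMod.val_injective _ (ginj i.val j.val (ZMod.val_lt i) (ZMod.val_lt j) h)
      · intro i j
        have hsucc : ∀ i' j' : ZMod (k + 4), j' = i' + 1 ↔ j'.val = (i'.val + 1) % (k + 4) := by
          intro i' j'
          rw [← (ZMod.val_injective (k + 4)).eq_iff, ZMod.val_add, ZMod.val_one'' (by omega)]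
        rw [hsucc i j, hsucc j i]
        exact main i.val j.val (ZMod.val_lt i) (ZMod.val_lt j)

private lemma clique_biconnected {V : Type*} {G : SimpleGraph V} {B : Set V}
    (hne : B.Nonempty) (hcl : ∀ a ∈ B, ∀ b ∈ B, a ≠ b → G.Adj a b) :
    IsBiconnectedSet G B := by
  have hpre : ∀ S : Set V, S ⊆ B → (G.induce S).Preconnected := by
    intro S hS u w
    rcases eq_or_ne u w with rfl | hne'
    · exact SimpleGraph.Reachable.refl _
    · have h : G.Adj ↑u ↑w := hcl u (hS u.2) w (hS w.2)
        (fun h => hne' (Subtype.coe_injective h))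
      exact SimpleGraph.Adj.reachable h
  haveI : Nonempty ↥B := hne.to_subtype
  exact ⟨SimpleGraph.Connected.mk (hpre B le_rfl), fun x _ => hpre _ Set.diff_subset⟩

private lemma exists_maximal_extension {V : Type*} [Fintype V] (G : SimpleGraph V)
    (C B₀ : Set V) (h1 : B₀ ⊆ C) (h2 : IsBiconnectedSet G B₀) :
    ∃ B : Set V, B₀ ⊆ B ∧ B ⊆ C ∧
      Maximal (fun s : Set V => s ⊆ C ∧ IsBiconnectedSet G s) B := by
  classical
  obtain ⟨B, hB, hmax⟩ := Set.Finite.exists_maximalFor id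
    {s : Set V | s ⊆ C ∧ IsBiconnectedSet G s ∧ B₀ ⊆ s} (Set.toFinite _) ⟨B₀, h1, h2, le_rfl⟩
  exact ⟨B, hB.2.2, hB.1, ⟨⟨hB.1, hB.2.1⟩, fun s hs hBs =>
    hmax ⟨hs.1, hs.2, hB.2.2.trans hBs⟩ hBs⟩⟩

theorem stmt_7 {V : Type*} [Fintype V] (G : SimpleGraph V)
    (hconn : G.Connected)
    (hC4 : ∀ a b c d : V, ¬ IsInducedC4 G a b c d)
    (hD : ∀ a b c d : V, ¬ IsInducedDiamond G a b c d)
    (v : V) (C : Set V) (hvC : v ∉ C)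
    (hCconn : (G.induce C).Connected)
    (hblock : IsBlockGraph (G.induce (C ∪ {v}))) :
    ∃ B : Set V, B ⊆ C ∧
      Maximal (fun s : Set V => s ⊆ C ∧ IsBiconnectedSet G s) B ∧
      {u | u ∈ C ∧ G.Adj v u} ⊆ B := by
  classical
  have hclique : ∀ a ∈ {u | u ∈ C ∧ G.Adj v u}, ∀ b ∈ {u | u ∈ C ∧ G.Adj v u},
      a ≠ b → G.Adj a b := by
    intro a ha b hb hab
    rcases neighbors_clique G hC4 hD v C hvC hCconn hblock.1 a b ha.1 hb.1 ha.2 hb.2 with h | h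
    · exact absurd h hab
    · exact h
  by_cases hN : ({u | u ∈ C ∧ G.Adj v u} : Set V).Nonempty
  · obtain ⟨B, hB0, hBC, hmax⟩ := exists_maximal_extension G C _
      (fun u hu => hu.1) (clique_biconnected hN hclique)
    exact ⟨B, hBC, hmax, hB0⟩
  · obtain ⟨⟨c, hc⟩⟩ := hCconn.nonempty
    obtain ⟨B, hB0, hBC, hmax⟩ := exists_maximal_extension G C {c}
      (by simpa using hc)
      (clique_biconnected ⟨c, rfl⟩ (by
        intro a ha b hb hab
        simp only [Set.mem_singleton_iff] at ha hb
        exact absurd (ha.trans hb.symm) hab))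
    exact ⟨B, hBC, hmax, fun u hu => absurd ⟨u, hu⟩ hN⟩
end

section
/- Let G be a simple graph that is C4-free and diamond-free (as induced subgraphs), and let Ĝ be the bipartite incidence graph whose vertex set is V(G) together with one vertex per maximal clique of G, where a vertex u of G is joined to a clique-vertex c_C if and only if u ∈ C and u belongs to at least two maximal cliques of G. Then for every S ⊆ V(G): G \ S is a block graph if and only if Ĝ \ S is acyclic. -/
/-!
Call a *clique cycle* of `G` avoiding `S` a cyclic sequence `v₀, C₀, v₁, C₁, …, v₍ₖ₋₁₎, C₍ₖ₋₁₎`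
of distinct vertices outside `S` and distinct maximal cliques with `vᵢ, vᵢ₊₁ ∈ Cᵢ`. These are
exactly the cycles of `Ĝ \ S`: a vertex on such a cycle lies in the two cliques `Cᵢ₋₁ ≠ Cᵢ`, so it
is external.

An induced cycle of length `≥ 4` in `G \ S` gives a clique cycle, since two consecutive edges of an
induced cycle never lie in a common clique. Conversely, a shortest clique cycle is an induced cycle
of `G \ S`: diamond-freeness puts every edge in a unique maximal clique, which rules out lengths
`2` and `3`, and a chord would close a strictly shorter clique cycle. Induced diamonds of `G \ S`
are induced diamonds of `G`, so they do not occur.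
-/

open Function Set

namespace SimpleGraph

variable {α : Type*} {H : SimpleGraph α}

structure IsCyclicSeq (H : SimpleGraph α) (m : ℕ) (w : ℕ → α) : Prop where
  three_le : 3 ≤ m
  periodic : Periodic w m
  injOn : InjOn w (Iio m)
  adj : ∀ i, H.Adj (w i) (w (i + 1))

def walkOfSeq (w : ℕ → α) (hw : ∀ i, H.Adj (w i) (w (i + 1))) : (n : ℕ) → H.Walk (w 0) (w n)
  | 0 => Walk.nil
  | n + 1 => (walkOfSeq w hw n).concat (hw n)

lemma support_walkOfSeq (w : ℕ → α) (hw : ∀ i, H.Adj (w i) (w (i + 1))) (n : ℕ) :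
    (walkOfSeq w hw n).support = (List.range (n + 1)).map w := by
  induction n with
  | zero => rfl
  | succ n ih =>
    rw [walkOfSeq, Walk.support_concat, ih, List.range_succ (n := n + 1), List.map_append]
    rfl

lemma length_walkOfSeq (w : ℕ → α) (hw : ∀ i, H.Adj (w i) (w (i + 1))) (n : ℕ) :
    (walkOfSeq w hw n).length = n := by
  simpa [support_walkOfSeq] using (walkOfSeq w hw n).length_support.symm

lemma IsCyclicSeq.shift {m : ℕ} {w : ℕ → α} (hw : H.IsCyclicSeq m w) :
    H.IsCyclicSeq m (fun i ↦ w (i + 1)) where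
  three_le := hw.three_le
  periodic := hw.periodic.add_const 1
  injOn i hi j hj h := by
    have hm : 0 < m := by have := hw.three_le; omega
    have h' : w ((i + 1) % m) = w ((j + 1) % m) := by
      rw [hw.periodic.map_mod_nat, hw.periodic.map_mod_nat]; exact h
    have := hw.injOn (Nat.mod_lt _ hm) (Nat.mod_lt _ hm) h'
    exact Nat.ModEq.eq_of_lt_of_lt (Nat.ModEq.add_right_cancel' 1 this) hi hj
  adj i := hw.adj (i + 1)

lemma IsCyclicSeq.not_isAcyclic {m : ℕ} {w : ℕ → α} (hw : H.IsCyclicSeq m w) :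
    ¬ H.IsAcyclic := by
  have hm := hw.three_le
  have hp : (walkOfSeq w hw.adj (m - 1)).IsPath := by
    rw [Walk.isPath_def, support_walkOfSeq]
    exact List.nodup_range.map_on fun i hi j hj h ↦
      hw.injOn (mem_Iio.2 (by rw [List.mem_range] at hi; omega))
        (mem_Iio.2 (by rw [List.mem_range] at hj; omega)) h
  have hclose : H.Adj (w 0) (w (m - 1)) := by
    have := hw.adj (m - 1)
    rw [Nat.sub_add_cancel (by omega), show w m = w 0 by simpa using hw.periodic 0] at this
    exact this.symm
  rw [isAcyclic_iff_subsingleton_path]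
  intro hsub
  have := congrArg (fun q : H.Path _ _ ↦ q.1.length)
    ((hsub _ _).elim ⟨_, hp⟩ (Path.singleton hclose))
  simp only [length_walkOfSeq, Path.singleton, Walk.length_cons, Walk.length_nil] at this
  omega

lemma exists_isCyclicSeq_of_not_isAcyclic (h : ¬ H.IsAcyclic) :
    ∃ m w, H.IsCyclicSeq m w := by
  simp only [IsAcyclic, not_forall, not_not] at h
  obtain ⟨u, p, hp⟩ := h
  have hm := hp.three_le_length
  have hsucc : ∀ i < p.length, p.getVert ((i + 1) % p.length) = p.getVert (i + 1) := by
    intro i hi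
    by_cases h : i + 1 = p.length
    · rw [h, Nat.mod_self, Walk.getVert_zero, Walk.getVert_length]
    · rw [Nat.mod_eq_of_lt (by omega)]
  refine ⟨p.length, fun i ↦ p.getVert (i % p.length), hm, fun i ↦ by simp, ?_, fun i ↦ ?_⟩
  · intro i hi j hj h
    simp only [mem_Iio] at hi hj
    dsimp only at h
    rw [Nat.mod_eq_of_lt hi, Nat.mod_eq_of_lt hj] at h
    exact hp.getVert_injOn' (Nat.le_sub_one_of_lt hi) (Nat.le_sub_one_of_lt hj) h
  · rw [← Nat.mod_add_mod, hsucc _ (Nat.mod_lt _ (by omega))]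
    exact p.adj_getVert_succ (Nat.mod_lt _ (by omega))

end SimpleGraph

lemma ZMod.val_add_one_eq_mod {k : ℕ} [NeZero k] (i : ZMod k) :
    (i + 1).val = (i.val + 1) % k := by
  rw [← ZMod.val_natCast, Nat.cast_succ, ZMod.natCast_zmod_val]

lemma ZMod.natCast_injOn_Iio (k : ℕ) : InjOn (Nat.cast : ℕ → ZMod k) (Iio k) :=
  fun a ha b hb h ↦ Nat.ModEq.eq_of_lt_of_lt ((ZMod.natCast_eq_natCast_iff a b k).1 h) ha hb

open SimpleGraph

section

variable {V : Type*} {G : SimpleGraph V}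

abbrev MaxClique (G : SimpleGraph V) := {s : Set V // Maximal G.IsClique s}

lemma exists_maxClique_superset {s : Set V} (hs : G.IsClique s) :
    ∃ C : MaxClique G, s ⊆ C.1 := by
  obtain ⟨C, hsC, hC⟩ := zorn_subset_nonempty {t | G.IsClique t}
    (fun c hc hchain _ ↦ ⟨⋃₀ c, (isClique_sUnion hchain.directedOn).2 hc,
      fun _ ↦ subset_sUnion_of_mem⟩) s hs
  exact ⟨⟨C, hC⟩, hsC⟩

lemma exists_maxClique_of_adj {u w : V} (h : G.Adj u w) :
    ∃ C : MaxClique G, u ∈ C.1 ∧ w ∈ C.1 := by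
  obtain ⟨C, hC⟩ := exists_maxClique_superset (isClique_pair.2 fun _ ↦ h)
  exact ⟨C, hC (by simp), hC (by simp)⟩

lemma IsInducedDiamond.of_induce {s : Set V} {a b c d : s}
    (h : IsInducedDiamond (G.induce s) a b c d) : IsInducedDiamond G a b c d := by
  simpa [IsInducedDiamond, Subtype.val_inj] using h

/-- A vertex of `C` outside `C'` and a non-neighbour of it in `C'` would span a diamond with the
edge `uw`. -/
lemma MaxClique.eq_of_adj (hD : ∀ a b c d : V, ¬ IsInducedDiamond G a b c d) {u w : V}
    (huw : G.Adj u w) {C C' : MaxClique G} (huC : u ∈ C.1) (hwC : w ∈ C.1)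
    (huC' : u ∈ C'.1) (hwC' : w ∈ C'.1) : C = C' := by
  by_contra hne
  obtain ⟨x, hxC, hxC'⟩ : ∃ x ∈ C.1, x ∉ C'.1 := by
    by_contra! h
    exact hne (Subtype.ext (C.2.eq_of_subset C'.2.prop h))
  obtain ⟨y, hyC', hxy, hnxy⟩ : ∃ y ∈ C'.1, x ≠ y ∧ ¬ G.Adj x y := by
    by_contra! h
    exact hxC' (C'.2.mem_of_prop_insert (isClique_insert.2 ⟨C'.2.prop, h⟩))
  have hxu : x ≠ u := by rintro rfl; exact hxC' huC'
  have hxw : x ≠ w := by rintro rfl; exact hxC' hwC'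
  have hxu' := C.2.prop hxC huC hxu
  have hxw' := C.2.prop hxC hwC hxw
  have hyu : y ≠ u := by rintro rfl; exact hnxy hxu'
  have hyw : y ≠ w := by rintro rfl; exact hnxy hxw'
  exact hD u x w y ⟨hxu.symm, huw.ne, hyu.symm, hxw, hxy, hyw.symm, hxu'.symm, hxw',
    (C'.2.prop hyC' hwC' hyw).symm, C'.2.prop hyC' huC' hyu, huw, hnxy⟩

structure CliqueCycle (G : SimpleGraph V) (S : Set V) (k : ℕ) where
  v : ZMod k → V
  c : ZMod k → MaxClique G
  two_le : 2 ≤ k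
  v_injective : Injective v
  c_injective : Injective c
  v_mem : ∀ i, v i ∈ (c i).1
  v_succ_mem : ∀ i, v (i + 1) ∈ (c i).1
  v_notMem : ∀ i, v i ∉ S

def HasCliqueCycle (G : SimpleGraph V) (S : Set V) : Prop :=
  ∃ k, Nonempty (CliqueCycle G S k)

namespace CliqueCycle

variable {S : Set V} {k : ℕ}

def ofSeq (hk : 2 ≤ k) (v : ℕ → V) (c : ℕ → MaxClique G) (hv : InjOn v (Iio k))
    (hc : InjOn c (Iio k)) (hmem : ∀ n < k, v n ∈ (c n).1)
    (hsucc : ∀ n < k, v ((n + 1) % k) ∈ (c n).1) (hS : ∀ n < k, v n ∉ S) :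
    CliqueCycle G S k :=
  haveI : NeZero k := ⟨by omega⟩
  { v := fun i ↦ v i.val
    c := fun i ↦ c i.val
    two_le := hk
    v_injective := fun a b h ↦ ZMod.val_injective k (hv (ZMod.val_lt a) (ZMod.val_lt b) h)
    c_injective := fun a b h ↦ ZMod.val_injective k (hc (ZMod.val_lt a) (ZMod.val_lt b) h)
    v_mem := fun i ↦ hmem _ (ZMod.val_lt i)
    v_succ_mem := fun i ↦ by
      simpa only [ZMod.val_add_one_eq_mod] using hsucc _ (ZMod.val_lt i)
    v_notMem := fun i ↦ hS _ (ZMod.val_lt i) }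

variable (D : CliqueCycle G S k)

lemma adj_succ (i : ZMod k) : G.Adj (D.v i) (D.v (i + 1)) := by
  have : Fact (1 < k) := ⟨D.two_le⟩
  refine (D.c i).2.prop (D.v_mem i) (D.v_succ_mem i) fun h ↦ ?_
  simpa using D.v_injective h

/-- Close the path `v t, v (t + 1), …, v s` of `D` by the clique `C`. -/
lemma exists_shorter_of_mem {t s : ZMod k} {C : MaxClique G} (hst : s ≠ t) (hst' : s + 1 ≠ t)
    (ht : D.v t ∈ C.1) (hs : D.v s ∈ C.1) (hC : ∀ n < (s - t).val, D.c (t + n) ≠ C) :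
    ∃ k' < k, Nonempty (CliqueCycle G S k') := by
  have : NeZero k := ⟨by have := D.two_le; omega⟩
  set e := (s - t).val with he
  have hse : t + (e : ZMod k) = s := by rw [he, ZMod.natCast_zmod_val]; ring
  have he0 : e ≠ 0 := by rw [he, ZMod.val_ne_zero, sub_ne_zero]; exact hst
  have hek : e + 1 < k := by
    refine lt_of_le_of_ne (ZMod.val_lt _) fun h ↦ hst' ?_
    have := congrArg (Nat.cast : ℕ → ZMod k) h
    rw [ZMod.natCast_self, Nat.cast_succ, ZMod.natCast_zmod_val] at this
    linear_combination this
  have hcast : InjOn (fun n : ℕ ↦ t + (n : ZMod k)) (Iio (e + 1)) := fun a ha b hb h ↦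
    ZMod.natCast_injOn_Iio k (lt_trans ha hek) (lt_trans hb hek) (add_left_cancel h)
  refine ⟨e + 1, hek, ⟨ofSeq (by omega) (fun n ↦ D.v (t + n))
    (fun n ↦ if n = e then C else D.c (t + n)) (D.v_injective.comp_injOn hcast) ?_ ?_ ?_
    fun n _ ↦ D.v_notMem _⟩⟩
  · intro a ha b hb h
    simp only [mem_Iio] at ha hb
    dsimp only at h
    split_ifs at h with h₁ h₂ h₂
    · rw [h₁, h₂]
    · exact absurd h.symm (hC b (by omega))
    · exact absurd h (hC a (by omega))
    · exact hcast ha hb (D.c_injective h)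
  · intro n hn
    split_ifs with h
    · rwa [h, hse]
    · exact D.v_mem _
  · intro n hn
    split_ifs with h
    · rwa [h, Nat.mod_self, Nat.cast_zero, add_zero]
    · rw [Nat.mod_eq_of_lt (by omega), Nat.cast_succ, ← add_assoc]
      exact D.v_succ_mem _

lemma exists_shorter_of_adj {i j : ZMod k} (hij : G.Adj (D.v i) (D.v j)) (h₁ : j ≠ i + 1)
    (h₂ : i ≠ j + 1) : ∃ k' < k, Nonempty (CliqueCycle G S k') := by
  have hne : j ≠ i := by rintro rfl; exact G.irrefl hij
  obtain ⟨C, hiC, hjC⟩ := exists_maxClique_of_adj hij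
  by_cases hCc : ∃ l, D.c l = C
  · obtain ⟨l, rfl⟩ := hCc
    -- one endpoint of the chord is neither `v l` nor `v (l + 1)`, the two vertices where
    -- the cycle enters and leaves `c l`
    obtain ⟨s, hsC, hsl, hsl'⟩ : ∃ s, D.v s ∈ (D.c l).1 ∧ s ≠ l ∧ s ≠ l + 1 := by
      by_cases hi : i ≠ l ∧ i ≠ l + 1
      · exact ⟨i, hiC, hi⟩
      refine ⟨j, hjC, ?_, ?_⟩ <;> rintro rfl <;> grind
    refine D.exists_shorter_of_mem (t := l + 1) hsl' (by grind) (D.v_succ_mem l) hsC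
      fun n hn h ↦ ?_
    have : NeZero k := ⟨by have := D.two_le; omega⟩
    have hn1 : ((n + 1 : ℕ) : ZMod k) = 0 := by
      push_cast
      linear_combination D.c_injective h
    have := Nat.le_of_dvd n.succ_pos ((ZMod.natCast_eq_zero_iff _ _).1 hn1)
    have := ZMod.val_lt (s - (l + 1))
    omega
  · push Not at hCc
    exact D.exists_shorter_of_mem hne (Ne.symm h₂) hiC hjC fun n _ ↦ hCc _

include D in
lemma four_le (hD : ∀ a b c d : V, ¬ IsInducedDiamond G a b c d) : 4 ≤ k := by
  have := D.two_le
  by_contra! hk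
  obtain rfl | rfl : k = 2 ∨ k = 3 := by omega
  · have h10 : D.v (1 + 1) = D.v 0 := rfl
    have := MaxClique.eq_of_adj hD (D.adj_succ 0) (D.v_mem 0) (D.v_succ_mem 0)
      (h10 ▸ D.v_succ_mem 1) (D.v_mem 1)
    exact absurd (D.c_injective this) (by decide)
  · have h01 : G.Adj (D.v 0) (D.v 1) := D.adj_succ 0
    have h12 : G.Adj (D.v 1) (D.v 2) := D.adj_succ 1
    have h20 : G.Adj (D.v 2) (D.v 0) := D.adj_succ 2
    classical
    obtain ⟨C, hC⟩ := exists_maxClique_superset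
      (is3Clique_triple_iff.2 ⟨h01, h20.symm, h12⟩).isClique
    have e0 := MaxClique.eq_of_adj hD h01 (D.v_mem 0) (D.v_succ_mem 0) (hC (by simp))
      (hC (by simp))
    have e1 := MaxClique.eq_of_adj hD h12 (D.v_mem 1) (D.v_succ_mem 1 : D.v 2 ∈ _)
      (hC (by simp)) (hC (by simp))
    exact absurd (D.c_injective (e0.trans e1.symm)) (by decide)

end CliqueCycle

theorem hasLongInducedCycle_of_hasCliqueCycle (hD : ∀ a b c d : V, ¬ IsInducedDiamond G a b c d)
    {S : Set V} (h : HasCliqueCycle G S) : HasLongInducedCycle (G.induce Sᶜ) := by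
  classical
  obtain ⟨D⟩ := Nat.find_spec h
  refine ⟨Nat.find h, fun i ↦ ⟨D.v i, D.v_notMem i⟩, D.four_le hD,
    fun a b hab ↦ D.v_injective (congrArg Subtype.val hab), fun i j ↦ ⟨fun hij ↦ ?_, ?_⟩⟩
  · by_contra! hne
    obtain ⟨k', hk', hD'⟩ := D.exists_shorter_of_adj hij hne.1 hne.2
    exact Nat.find_min h hk' hD'
  · rintro (rfl | rfl)
    exacts [D.adj_succ i, (D.adj_succ j).symm]

theorem hasCliqueCycle_of_hasLongInducedCycle {S : Set V}
    (h : HasLongInducedCycle (G.induce Sᶜ)) : HasCliqueCycle G S := by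
  obtain ⟨n, f, hn, hf, hadj⟩ := h
  have hsucc : ∀ i, G.Adj (f i) (f (i + 1)) := fun i ↦ (hadj i (i + 1)).2 (Or.inl rfl)
  choose c hc hc' using fun i ↦ exists_maxClique_of_adj (hsucc i)
  have hval : ∀ {i j}, (f i).1 = (f j).1 → i = j := fun h ↦ hf (Subtype.ext h)
  have hcast : ∀ a < n, (a : ZMod n) = 0 → a = 0 := fun a ha h ↦
    ZMod.natCast_injOn_Iio n ha (by omega : 0 < n) (by simpa using h)
  -- `f i` and `f (i + 2)` are not adjacent, so no maximal clique holds both edges at `f (i + 1)`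
  have hc_succ : ∀ i, c i ≠ c (i + 1) := by
    intro i h
    have hmem : (f (i + 2)).1 ∈ (c i).1 := by rw [h, ← one_add_one_eq_two, ← add_assoc]; exact hc' _
    have hne : f i ≠ f (i + 2) := fun h' ↦ by
      have := hcast 2 (by omega) (by simpa using (add_eq_left.1 (hf h').symm))
      omega
    rcases (hadj i (i + 2)).1 ((c i).2.prop (hc i) hmem fun h' ↦ hne (Subtype.ext h')) with h | h
    · have := hcast 1 (by omega) (by push_cast; linear_combination h)
      omega
    · have := hcast 3 (by omega) (by push_cast; linear_combination -h)
      omega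
  refine ⟨n, ⟨⟨fun i ↦ f i, c, by omega, fun _ _ h ↦ hval h, fun i j h ↦ ?_, hc, hc',
    fun i ↦ (f i).2⟩⟩⟩
  by_contra hij
  rcases (hadj i j).1 ((c i).2.prop (hc i) (h ▸ hc j) fun h' ↦ hij (hval h')) with rfl | rfl
  exacts [hc_succ i h, hc_succ j h.symm]

theorem hasLongInducedCycle_induce_compl_iff
    (hD : ∀ a b c d : V, ¬ IsInducedDiamond G a b c d) {S : Set V} :
    HasLongInducedCycle (G.induce Sᶜ) ↔ HasCliqueCycle G S :=
  ⟨hasCliqueCycle_of_hasLongInducedCycle, hasLongInducedCycle_of_hasCliqueCycle hD⟩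

structure IsIncidenceGraph (G : SimpleGraph V) (Ghat : SimpleGraph (V ⊕ MaxClique G)) : Prop where
  adj_inl_inr_iff : ∀ u c, Ghat.Adj (.inl u) (.inr c) ↔ u ∈ c.1 ∧ ∃ c', c' ≠ c ∧ u ∈ c'.1
  not_adj_inl_inl : ∀ u u', ¬ Ghat.Adj (.inl u) (.inl u')
  not_adj_inr_inr : ∀ c c', ¬ Ghat.Adj (.inr c) (.inr c')

variable {Ghat : SimpleGraph (V ⊕ MaxClique G)} {S : Set V} {k : ℕ}

namespace CliqueCycle

variable (hG : IsIncidenceGraph G Ghat) (D : CliqueCycle G S k)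
include hG D

lemma adj_inl_inr (i : ZMod k) : Ghat.Adj (.inl (D.v i)) (.inr (D.c i)) := by
  have : Fact (1 < k) := ⟨D.two_le⟩
  refine (hG.adj_inl_inr_iff _ _).2 ⟨D.v_mem i, D.c (i - 1), fun h ↦ ?_, ?_⟩
  · simpa using D.c_injective h
  · simpa using D.v_succ_mem (i - 1)

lemma adj_inr_inl (i : ZMod k) : Ghat.Adj (.inr (D.c i)) (.inl (D.v (i + 1))) := by
  have : Fact (1 < k) := ⟨D.two_le⟩
  refine ((hG.adj_inl_inr_iff _ _).2 ⟨D.v_succ_mem i, D.c (i + 1), fun h ↦ ?_, D.v_mem _⟩).symm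
  simpa using D.c_injective h

theorem not_isAcyclic : ¬ (Ghat.induce {w | ∀ s ∈ S, w ≠ Sum.inl s}).IsAcyclic := by
  have := D.two_le
  set W : Set (V ⊕ MaxClique G) := {w | ∀ s ∈ S, w ≠ Sum.inl s}
  let X (n : ℕ) : W := ⟨.inl (D.v n), fun s hs h ↦ D.v_notMem _ (Sum.inl_injective h ▸ hs)⟩
  let Y (n : ℕ) : W := ⟨.inr (D.c n), fun _ _ ↦ Sum.inr_ne_inl⟩
  let w (j : ℕ) := if Even j then X (j / 2) else Y (j / 2)
  have hw₀ (n : ℕ) : w (2 * n) = X n := by simp [w]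
  have hw₁ (n : ℕ) : w (2 * n + 1) = Y n := by simp [w, show (2 * n + 1) / 2 = n by omega]
  have hX (n : ℕ) : X (n + k) = X n := by simp [X]
  have hY (n : ℕ) : Y (n + k) = Y n := by simp [Y]
  refine IsCyclicSeq.not_isAcyclic (m := 2 * k) (w := w) ⟨by omega, fun j ↦ ?_, ?_, fun j ↦ ?_⟩
  · obtain ⟨n, rfl | rfl⟩ := Nat.even_or_odd' j
    · rw [← mul_add, hw₀, hw₀, hX]
    · rw [add_right_comm, ← mul_add, hw₁, hw₁, hY]
  · intro a ha b hb h
    simp only [mem_Iio] at ha hb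
    obtain ⟨p, rfl | rfl⟩ := Nat.even_or_odd' a <;> obtain ⟨q, rfl | rfl⟩ := Nat.even_or_odd' b <;>
      simp only [hw₀, hw₁, X, Y, Subtype.mk.injEq, Sum.inl.injEq, Sum.inr.injEq,
        reduceCtorEq] at h
    · rw [ZMod.natCast_injOn_Iio k (mem_Iio.2 (by omega)) (mem_Iio.2 (by omega)) (D.v_injective h)]
    · rw [ZMod.natCast_injOn_Iio k (mem_Iio.2 (by omega)) (mem_Iio.2 (by omega)) (D.c_injective h)]
  · obtain ⟨n, rfl | rfl⟩ := Nat.even_or_odd' j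
    · rw [hw₀, hw₁]
      exact D.adj_inl_inr hG n
    · rw [show 2 * n + 1 + 1 = 2 * (n + 1) by ring, hw₀, hw₁]
      have := D.adj_inr_inl hG n
      rwa [← Nat.cast_succ] at this

end CliqueCycle

namespace IsIncidenceGraph

variable (hG : IsIncidenceGraph G Ghat)
include hG

lemma exists_inr_of_adj_inl {u : V} {y : V ⊕ MaxClique G} (h : Ghat.Adj (.inl u) y) :
    ∃ c, y = .inr c := by
  cases y with
  | inl u' => exact absurd h (hG.not_adj_inl_inl _ _)
  | inr c => exact ⟨c, rfl⟩

lemma exists_inl_of_adj_inr {c : MaxClique G} {y : V ⊕ MaxClique G} (h : Ghat.Adj (.inr c) y) :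
    ∃ u, y = .inl u := by
  cases y with
  | inl u => exact ⟨u, rfl⟩
  | inr c' => exact absurd h (hG.not_adj_inr_inr _ _)

theorem hasCliqueCycle_of_not_isAcyclic
    (h : ¬ (Ghat.induce {w | ∀ s ∈ S, w ≠ Sum.inl s}).IsAcyclic) : HasCliqueCycle G S := by
  set W : Set (V ⊕ MaxClique G) := {w | ∀ s ∈ S, w ≠ Sum.inl s}
  obtain ⟨m, w₀, hw₀⟩ := exists_isCyclicSeq_of_not_isAcyclic h
  obtain ⟨w, hw, u₀, hu₀⟩ : ∃ w : ℕ → W, (Ghat.induce W).IsCyclicSeq m w ∧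
      ∃ u, (w 0).1 = .inl u := by
    rcases h₀ : (w₀ 0).1 with u | c
    · exact ⟨w₀, hw₀, u, h₀⟩
    · have h₁ : Ghat.Adj (w₀ 0).1 (w₀ 1).1 := hw₀.adj 0
      rw [h₀] at h₁
      exact ⟨_, hw₀.shift, hG.exists_inl_of_adj_inr h₁⟩
  have hadj (i : ℕ) : Ghat.Adj (w i).1 (w (i + 1)).1 := hw.adj i
  have hside (n : ℕ) : ∃ u c, (w (2 * n)).1 = .inl u ∧ (w (2 * n + 1)).1 = .inr c := by
    induction n with
    | zero =>
      have h₀ := hadj 0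
      rw [hu₀] at h₀
      obtain ⟨c, hc⟩ := hG.exists_inr_of_adj_inl h₀
      exact ⟨u₀, c, hu₀, hc⟩
    | succ n ih =>
      obtain ⟨-, c, -, hc⟩ := ih
      have h₁ := hadj (2 * n + 1)
      rw [hc] at h₁
      obtain ⟨u, hu⟩ := hG.exists_inl_of_adj_inr h₁
      have h₂ := hadj (2 * n + 1 + 1)
      rw [hu] at h₂
      obtain ⟨c', hc'⟩ := hG.exists_inr_of_adj_inl h₂
      exact ⟨u, c', hu, hc'⟩
  choose v c hv hc using hside
  have hper : ∀ i, w (i + m) = w i := hw.periodic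
  obtain ⟨k, rfl | rfl⟩ := Nat.even_or_odd' m
  swap
  · have := hc k
    rw [← zero_add (2 * k + 1), hper, hu₀] at this
    exact absurd this Sum.inl_ne_inr
  have hm := hw.three_le
  have hinj {a b : ℕ} (ha : a < 2 * k) (hb : b < 2 * k) (h : (w a).1 = (w b).1) : a = b :=
    hw.injOn ha hb (Subtype.ext h)
  refine ⟨k, ⟨CliqueCycle.ofSeq (by omega) v c (fun a ha b hb h ↦ ?_) (fun a ha b hb h ↦ ?_)
    (fun n _ ↦ ?_) (fun n _ ↦ ?_) (fun n _ hn ↦ ?_)⟩⟩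
  · have := hinj (a := 2 * a) (b := 2 * b) (by rw [mem_Iio] at ha; omega)
      (by rw [mem_Iio] at hb; omega) (by rw [hv, hv, h])
    omega
  · have := hinj (a := 2 * a + 1) (b := 2 * b + 1) (by rw [mem_Iio] at ha; omega)
      (by rw [mem_Iio] at hb; omega) (by rw [hc, hc, h])
    omega
  · have := hadj (2 * n)
    rw [hv, hc] at this
    exact ((hG.adj_inl_inr_iff _ _).1 this).1
  · have hv_per : Periodic v k := fun n ↦ Sum.inl_injective <| by
      rw [← hv, ← hv, mul_add, hper]
    have := hadj (2 * n + 1)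
    rw [hc, show 2 * n + 1 + 1 = 2 * (n + 1) by ring, hv, ← hv_per.map_mod_nat] at this
    exact ((hG.adj_inl_inr_iff _ _).1 this.symm).1
  · exact (w (2 * n)).2 _ hn (hv n)

theorem not_isAcyclic_iff :
    ¬ (Ghat.induce {w | ∀ s ∈ S, w ≠ Sum.inl s}).IsAcyclic ↔ HasCliqueCycle G S :=
  ⟨hG.hasCliqueCycle_of_not_isAcyclic, fun ⟨_, ⟨D⟩⟩ ↦ D.not_isAcyclic hG⟩

end IsIncidenceGraph

end

theorem stmt_9_general {V : Type*} (G : SimpleGraph V)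
    (hD : ∀ a b c d : V, ¬ IsInducedDiamond G a b c d)
    (Ghat : SimpleGraph (V ⊕ {s : Set V // Maximal G.IsClique s}))
    (hVC : ∀ (u : V) (c : {s : Set V // Maximal G.IsClique s}),
      Ghat.Adj (Sum.inl u) (Sum.inr c) ↔
        (u ∈ c.val ∧ ∃ c' : {s : Set V // Maximal G.IsClique s}, c' ≠ c ∧ u ∈ c'.val))
    (hVV : ∀ u u' : V, ¬ Ghat.Adj (Sum.inl u) (Sum.inl u'))
    (hCC : ∀ c c' : {s : Set V // Maximal G.IsClique s},
      ¬ Ghat.Adj (Sum.inr c) (Sum.inr c')) :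
    ∀ S : Set V,
      IsBlockGraph (G.induce Sᶜ) ↔
        (Ghat.induce {w | ∀ s ∈ S, w ≠ Sum.inl s}).IsAcyclic := by
  intro S
  have hG : IsIncidenceGraph G Ghat := ⟨hVC, hVV, hCC⟩
  have hdiamond (a b c d : ↥Sᶜ) : ¬ IsInducedDiamond (G.induce Sᶜ) a b c d :=
    fun h ↦ hD _ _ _ _ h.of_induce
  rw [IsBlockGraph, and_iff_left hdiamond, hasLongInducedCycle_induce_compl_iff hD,
    ← hG.not_isAcyclic_iff, not_not]

theorem stmt_9 {V : Type*} [Fintype V] (G : SimpleGraph V)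
    (hC4 : ∀ a b c d : V, ¬ IsInducedC4 G a b c d)
    (hD : ∀ a b c d : V, ¬ IsInducedDiamond G a b c d)
    (Ghat : SimpleGraph (V ⊕ {s : Set V // Maximal G.IsClique s}))
    (hVC : ∀ (u : V) (c : {s : Set V // Maximal G.IsClique s}),
      Ghat.Adj (Sum.inl u) (Sum.inr c) ↔
        (u ∈ c.val ∧ ∃ c' : {s : Set V // Maximal G.IsClique s}, c' ≠ c ∧ u ∈ c'.val))
    (hVV : ∀ u u' : V, ¬ Ghat.Adj (Sum.inl u) (Sum.inl u'))
    (hCC : ∀ c c' : {s : Set V // Maximal G.IsClique s},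
      ¬ Ghat.Adj (Sum.inr c) (Sum.inr c')) :
    ∀ S : Set V,
      IsBlockGraph (G.induce Sᶜ) ↔
        (Ghat.induce {w | ∀ s ∈ S, w ≠ Sum.inl s}).IsAcyclic :=
  stmt_9_general G hD Ghat hVC hVV hCC
end

section
/- Let G be a C4-free, diamond-free simple graph and let Ĝ be its clique-incidence bipartite graph (vertices of G on one side, maximal cliques on the other, with edges between external vertices and the maximal cliques containing them). Then any cycle in Ĝ has length at least 8. In particular, Ĝ contains no cycle of length 4 or 6. -/
private lemma clique_missing {V : Type*} {G : SimpleGraph V} {c : Set V}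
    (hc : Maximal G.IsClique c) {x : V} (hx : x ∉ c) :
    ∃ y ∈ c, y ≠ x ∧ ¬ G.Adj x y := by
  have hnc : ¬ G.IsClique (insert x c) := fun h =>
    hx (hc.2 h (Set.subset_insert x c) (Set.mem_insert x c))
  rw [SimpleGraph.isClique_iff, Set.Pairwise] at hnc
  push_neg at hnc
  obtain ⟨a, ha, b, hb, hab, hnadj⟩ := hnc
  rcases Set.mem_insert_iff.mp ha with rfl | ha2
  · rcases Set.mem_insert_iff.mp hb with rfl | hb2
    · exact absurd rfl hab
    · exact ⟨b, hb2, fun h => hab h.symm, hnadj⟩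
  · rcases Set.mem_insert_iff.mp hb with rfl | hb2
    · exact ⟨a, ha2, hab, fun h => hnadj h.symm⟩
    · exact absurd (hc.1 ha2 hb2 hab) hnadj

private lemma inter_sub {V : Type*} {G : SimpleGraph V}
    (hD : ∀ a b c d : V, ¬ IsInducedDiamond G a b c d)
    {c c' : Set V} (hc : Maximal G.IsClique c) (hc' : Maximal G.IsClique c')
    (hne : c ≠ c') {u u' : V} (hu : u ∈ c) (hu1 : u ∈ c') (hv : u' ∈ c) (hv1 : u' ∈ c') :
    u = u' := by
  by_contra huv
  have hsub : ¬ c ⊆ c' := fun hs => hne (Set.Subset.antisymm hs (hc.2 hc'.1 hs))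
  obtain ⟨xx, hxc, hxc'⟩ := Set.not_subset.mp hsub
  obtain ⟨y, hyc', hyx, hnxy⟩ := clique_missing hc' hxc'
  have hxu : xx ≠ u := fun h => hxc' (h ▸ hu1)
  have hxu' : xx ≠ u' := fun h => hxc' (h ▸ hv1)
  have hyu : y ≠ u := by rintro rfl; exact hnxy (hc.1 hxc hu hxu)
  have hyu' : y ≠ u' := by rintro rfl; exact hnxy (hc.1 hxc hv hxu')
  exact hD u xx u' y ⟨Ne.symm hxu, huv, Ne.symm hyu, hxu', Ne.symm hyx, Ne.symm hyu',
    hc.1 hu hxc (Ne.symm hxu), hc.1 hxc hv hxu', hc'.1 hv1 hyc' (Ne.symm hyu'),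
    hc'.1 hyc' hu1 hyu, hc.1 hu hv huv, hnxy⟩

private lemma tri {V : Type*} {G : SimpleGraph V}
    (hD : ∀ a b c d : V, ¬ IsInducedDiamond G a b c d)
    {c1 c2 c3 : Set V}
    (h1 : Maximal G.IsClique c1) (h2 : Maximal G.IsClique c2) (h3 : Maximal G.IsClique c3)
    (h12 : c1 ≠ c2) (_h23 : c2 ≠ c3) (_h13 : c1 ≠ c3)
    {u1 u2 u3 : V} (n12 : u1 ≠ u2) (n23 : u2 ≠ u3) (n13 : u1 ≠ u3)
    (m1a : u1 ∈ c3) (m1b : u1 ∈ c1) (m2a : u2 ∈ c1) (m2b : u2 ∈ c2)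
    (m3a : u3 ∈ c2) (m3b : u3 ∈ c3) : False := by
  have hadj23 : G.Adj u2 u3 := h2.1 m2b m3a n23
  have hadj31 : G.Adj u3 u1 := h3.1 m3b m1a (Ne.symm n13)
  have hadj12 : G.Adj u1 u2 := h1.1 m1b m2a n12
  have hu3c1 : u3 ∉ c1 := fun h => n23 (inter_sub hD h1 h2 h12 m2a m2b h m3a)
  obtain ⟨z, hzc1, hz3, hnz⟩ := clique_missing h1 hu3c1
  have hz1 : z ≠ u1 := by rintro rfl; exact hnz hadj31
  have hz2 : z ≠ u2 := by rintro rfl; exact hnz hadj23.symm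
  exact hD u1 z u2 u3 ⟨Ne.symm hz1, n12, n13, hz2, hz3, n23,
    h1.1 m1b hzc1 (Ne.symm hz1), h1.1 hzc1 m2a hz2, hadj23, hadj31, hadj12,
    fun h => hnz h.symm⟩

private lemma parity {V C : Type*} {H : SimpleGraph (V ⊕ C)}
    (hVV : ∀ u u' : V, ¬ H.Adj (Sum.inl u) (Sum.inl u'))
    (hCC : ∀ c c' : C, ¬ H.Adj (Sum.inr c) (Sum.inr c')) :
    ∀ {x y : V ⊕ C} (w : H.Walk x y), Even w.length ↔ x.isLeft = y.isLeft := by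
  intro x y w
  induction w with
  | nil => simp
  | @cons a b c h p ih =>
    have hne : a.isLeft ≠ b.isLeft := by
      cases a with
      | inl u => cases b with
        | inl u' => exact absurd h (hVV u u')
        | inr c' => simp
      | inr cc => cases b with
        | inl u' => simp
        | inr c' => exact absurd h (hCC cc c')
    simp only [SimpleGraph.Walk.length_cons, Nat.even_add_one, ih]
    cases hx : a.isLeft <;> cases hy : b.isLeft <;> cases hz : c.isLeft <;> simp_all

theorem stmt_10 {V : Type*} [Fintype V] (G : SimpleGraph V)
    (hC4 : ∀ a b c d : V, ¬ IsInducedC4 G a b c d)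
    (hD : ∀ a b c d : V, ¬ IsInducedDiamond G a b c d)
    (Ghat : SimpleGraph (V ⊕ {s : Set V // Maximal G.IsClique s}))
    (hVC : ∀ (u : V) (c : {s : Set V // Maximal G.IsClique s}),
      Ghat.Adj (Sum.inl u) (Sum.inr c) ↔
        (u ∈ c.val ∧ ∃ c' : {s : Set V // Maximal G.IsClique s}, c' ≠ c ∧ u ∈ c'.val))
    (hVV : ∀ u u' : V, ¬ Ghat.Adj (Sum.inl u) (Sum.inl u'))
    (hCC : ∀ c c' : {s : Set V // Maximal G.IsClique s},
      ¬ Ghat.Adj (Sum.inr c) (Sum.inr c')) :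
    ∀ (x : V ⊕ {s : Set V // Maximal G.IsClique s}) (w : Ghat.Walk x x),
      w.IsCycle → 8 ≤ w.length := by
  intro x w hw
  by_contra hlt
  push_neg at hlt
  have h3 := hw.three_le_length
  have heven : Even w.length := by rw [parity hVV hCC w]
  obtain ⟨k, hk⟩ := heven
  have hlen : w.length = 4 ∨ w.length = 6 := by omega
  have hnodup := hw.support_nodup
  clear hw hk hlt h3
  rcases hlen with hl | hl
  · -- length 4
    cases x with
    | inl u =>
      cases w with
      | nil => simp at hl
      | @cons _ b _ e1 p =>
        cases b with
        | inl u' => exact hVV u u' e1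
        | inr c1 =>
          cases p with
          | @cons _ b _ e2 p =>
            cases b with
            | inr c' => exact hCC c1 c' e2
            | inl u2 =>
              cases p with
              | nil => simp at hl
              | @cons _ b _ e3 p =>
                cases b with
                | inl u' => exact hVV u2 u' e3
                | inr c2 =>
                  cases p with
                  | @cons _ b _ e4 p =>
                    cases p with
                    | nil =>
                      simp [List.nodup_cons] at hnodup
                      obtain ⟨hc12, hu2u⟩ := hnodup
                      have m1 := ((hVC u c1).mp e1).1
                      have m2 := ((hVC u2 c1).mp e2.symm).1
                      have m3 := ((hVC u2 c2).mp e3).1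
                      have m4 := ((hVC u c2).mp e4.symm).1
                      exact (Ne.symm hu2u)
                        (inter_sub hD c1.2 c2.2 (fun h => hc12 (Subtype.ext h)) m1 m4 m2 m3)
                    | cons e5 p => simp [SimpleGraph.Walk.length_cons] at hl
    | inr c =>
      cases w with
      | nil => simp at hl
      | @cons _ b _ e1 p =>
        cases b with
        | inr c' => exact hCC c c' e1
        | inl u1 =>
          cases p with
          | @cons _ b _ e2 p =>
            cases b with
            | inl u' => exact hVV u1 u' e2
            | inr c2 =>
              cases p with
              | nil => simp at hl
              | @cons _ b _ e3 p =>
                cases b with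
                | inr c' => exact hCC c2 c' e3
                | inl u2 =>
                  cases p with
                  | @cons _ b _ e4 p =>
                    cases p with
                    | nil =>
                      simp [List.nodup_cons] at hnodup
                      obtain ⟨hu12, hcc2⟩ := hnodup
                      have m1 := ((hVC u1 c).mp e1.symm).1
                      have m2 := ((hVC u1 c2).mp e2).1
                      have m3 := ((hVC u2 c2).mp e3.symm).1
                      have m4 := ((hVC u2 c).mp e4).1
                      exact hu12
                        (inter_sub hD c.2 c2.2 (fun h => hcc2 (Subtype.ext h).symm) m1 m2 m4 m3)
                    | cons e5 p => simp [SimpleGraph.Walk.length_cons] at hl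
  · -- length 6
    cases x with
    | inl u1 =>
      cases w with
      | nil => simp at hl
      | @cons _ b _ e1 p =>
        cases b with
        | inl u' => exact hVV u1 u' e1
        | inr c1 =>
          cases p with
          | @cons _ b _ e2 p =>
            cases b with
            | inr c' => exact hCC c1 c' e2
            | inl u2 =>
              cases p with
              | nil => simp at hl
              | @cons _ b _ e3 p =>
                cases b with
                | inl u' => exact hVV u2 u' e3
                | inr c2 =>
                  cases p with
                  | @cons _ b _ e4 p =>
                    cases b with
                    | inr c' => exact hCC c2 c' e4
                    | inl u3 =>
                      cases p with
                      | nil => simp at hl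
                      | @cons _ b _ e5 p =>
                        cases b with
                        | inl u' => exact hVV u3 u' e5
                        | inr c3 =>
                          cases p with
                          | @cons _ b _ e6 p =>
                            cases p with
                            | nil =>
                              simp [List.nodup_cons] at hnodup
                              obtain ⟨⟨h12, h13⟩, ⟨n23, n21⟩, h23, n31⟩ := hnodup
                              have m1b := ((hVC u1 c1).mp e1).1
                              have m2a := ((hVC u2 c1).mp e2.symm).1
                              have m2b := ((hVC u2 c2).mp e3).1
                              have m3a := ((hVC u3 c2).mp e4.symm).1
                              have m3b := ((hVC u3 c3).mp e5).1
                              have m1a := ((hVC u1 c3).mp e6.symm).1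
                              exact tri hD c1.2 c2.2 c3.2
                                (fun h => h12 (Subtype.ext h))
                                (fun h => h23 (Subtype.ext h))
                                (fun h => h13 (Subtype.ext h))
                                (Ne.symm n21) n23 (Ne.symm n31)
                                m1a m1b m2a m2b m3a m3b
                            | cons e7 p => simp [SimpleGraph.Walk.length_cons] at hl
    | inr c1 =>
      cases w with
      | nil => simp at hl
      | @cons _ b _ e1 p =>
        cases b with
        | inr c' => exact hCC c1 c' e1
        | inl u1 =>
          cases p with
          | @cons _ b _ e2 p =>
            cases b with
            | inl u' => exact hVV u1 u' e2
            | inr c2 =>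
              cases p with
              | nil => simp at hl
              | @cons _ b _ e3 p =>
                cases b with
                | inr c' => exact hCC c2 c' e3
                | inl u2 =>
                  cases p with
                  | @cons _ b _ e4 p =>
                    cases b with
                    | inl u' => exact hVV u2 u' e4
                    | inr c3 =>
                      cases p with
                      | nil => simp at hl
                      | @cons _ b _ e5 p =>
                        cases b with
                        | inr c' => exact hCC c3 c' e5
                        | inl u3 =>
                          cases p with
                          | @cons _ b _ e6 p =>
                            cases p with
                            | nil =>
                              simp [List.nodup_cons] at hnodup
                              obtain ⟨⟨n12, n13⟩, ⟨h23, h21⟩, n23, h31⟩ := hnodup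
                              have m1a := ((hVC u1 c1).mp e1.symm).1
                              have m1b := ((hVC u1 c2).mp e2).1
                              have m2a := ((hVC u2 c2).mp e3.symm).1
                              have m2b := ((hVC u2 c3).mp e4).1
                              have m3a := ((hVC u3 c3).mp e5.symm).1
                              have m3b := ((hVC u3 c1).mp e6).1
                              -- tri with cliques (c1,c2,c3) and vertices (u3,u1,u2):
                              -- u3 ∈ c3 ∩ c1, u1 ∈ c1 ∩ c2, u2 ∈ c2 ∩ c3
                              exact tri hD c1.2 c2.2 c3.2
                                (fun h => h21 (Subtype.ext h).symm)
                                (fun h => h23 (Subtype.ext h))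
                                (fun h => h31 (Subtype.ext h).symm)
                                (Ne.symm n13) n12 (Ne.symm n23)
                                m3a m3b m1a m1b m2a m2b
                            | cons e7 p => simp [SimpleGraph.Walk.length_cons] at hl
end

section
/- Let G be a graph with a set A ⊆ V(G) such that G \ A is a block graph. Suppose that for some vertex v ∈ V(G), the graph G contains k+1 induced subgraphs O_1, ..., O_{k+1}, each isomorphic to C4 or to the diamond, which pairwise intersect exactly in {v}. Then every set S ⊆ V(G) of size at most k with G \ S a block graph must contain v. -/
/-- `s` is the vertex set of an induced C4 or an induced diamond in `G`. -/
def IsObstruction {V : Type*} (G : SimpleGraph V) (s : Set V) : Prop :=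
  ∃ a b c d : V, s = {a, b, c, d} ∧
    (IsInducedC4 G a b c d ∨ IsInducedDiamond G a b c d)


/-! An obstruction disjoint from `S` is still an induced C4 or diamond in `G \ S`, so a block
vertex deletion set `S` meets every obstruction. If `v ∉ S`, the `k + 1` obstructions, which
pairwise share only `v`, are met by `S` in pairwise distinct vertices, so `|S| ≥ k + 1`. -/

theorem ZMod.four_cases (i : ZMod 4) : i = 0 ∨ i = 1 ∨ i = 2 ∨ i = 3 := by
  revert i
  decide

section Obstruction

variable {V : Type*} {G : SimpleGraph V} {a b c d : V}

theorem IsInducedC4.induce {T : Set V} (h : IsInducedC4 G a b c d)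
    (ha : a ∈ T) (hb : b ∈ T) (hc : c ∈ T) (hd : d ∈ T) :
    IsInducedC4 (G.induce T) ⟨a, ha⟩ ⟨b, hb⟩ ⟨c, hc⟩ ⟨d, hd⟩ := by
  simpa [IsInducedC4] using h

theorem IsInducedDiamond.induce {T : Set V} (h : IsInducedDiamond G a b c d)
    (ha : a ∈ T) (hb : b ∈ T) (hc : c ∈ T) (hd : d ∈ T) :
    IsInducedDiamond (G.induce T) ⟨a, ha⟩ ⟨b, hb⟩ ⟨c, hc⟩ ⟨d, hd⟩ := by
  simpa [IsInducedDiamond] using h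

theorem IsInducedC4.hasLongInducedCycle (h : IsInducedC4 G a b c d) : HasLongInducedCycle G := by
  obtain ⟨hab, hac, had, hbc, hbd, hcd, e1, e2, e3, e4, n1, n2⟩ := h
  refine ⟨4, ![a, b, c, d], le_rfl, ?_, ?_⟩
  · intro (i : ZMod 4) (j : ZMod 4)
    rcases i.four_cases with rfl | rfl | rfl | rfl <;>
      rcases j.four_cases with rfl | rfl | rfl | rfl <;> simp [*, eq_comm]
  · intro i j
    rcases i.four_cases with rfl | rfl | rfl | rfl <;>
      rcases j.four_cases with rfl | rfl | rfl | rfl <;>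
      simp [e1, e2, e3, e4, e1.symm, e2.symm, e3.symm, e4.symm, n1, n2, mt G.adj_symm n1,
        mt G.adj_symm n2] <;> decide

theorem IsBlockGraph.not_isInducedC4 (hG : IsBlockGraph G) : ¬ IsInducedC4 G a b c d :=
  fun h => hG.1 h.hasLongInducedCycle

theorem IsBlockGraph.not_subset_of_isObstruction {T s : Set V} (hG : IsBlockGraph (G.induce T))
    (hs : IsObstruction G s) : ¬ s ⊆ T := by
  obtain ⟨a, b, c, d, rfl, hC4 | hdiamond⟩ := hs <;> intro hsub <;>
    simp only [Set.insert_subset_iff, Set.singleton_subset_iff] at hsub <;>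
    obtain ⟨ha, hb, hc, hd⟩ := hsub
  · exact hG.not_isInducedC4 (hC4.induce ha hb hc hd)
  · exact hG.2 _ _ _ _ (hdiamond.induce ha hb hc hd)

theorem IsBlockGraph.inter_nonempty_of_isObstruction {S s : Set V}
    (hG : IsBlockGraph (G.induce Sᶜ)) (hs : IsObstruction G s) : (s ∩ S).Nonempty := by
  by_contra h
  exact hG.not_subset_of_isObstruction hs fun x hx hxS => h ⟨x, hx, hxS⟩

end Obstruction

theorem Set.card_le_ncard_of_forall_inter_nonempty {ι α : Type*} [Fintype ι] {O : ι → Set α}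
    {S : Set α} {v : α} (hS : S.Finite) (hpair : Pairwise fun i j => O i ∩ O j ⊆ {v})
    (hvS : v ∉ S) (hmeet : ∀ i, (O i ∩ S).Nonempty) : Fintype.card ι ≤ S.ncard := by
  choose f hfO hfS using hmeet
  have hinj : Function.Injective fun i => (⟨f i, hfS i⟩ : S) := by
    intro i j hij
    by_contra hne
    have hfij : f i = f j := congrArg Subtype.val hij
    have hfv : f i = v := hpair hne ⟨hfO i, hfij ▸ hfO j⟩
    exact hvS (hfv ▸ hfS i)
  have := hS.to_subtype
  simpa using Nat.card_le_card_of_injective _ hinj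

theorem stmt_13_general {V : Type*} [Fintype V] (G : SimpleGraph V) (v : V) (k : ℕ)
    (O : Fin (k + 1) → Set V)
    (hobs : ∀ i, IsObstruction G (O i))
    (hpair : ∀ i j, i ≠ j → O i ∩ O j = {v}) :
    ∀ S : Set V, S.ncard ≤ k → IsBlockGraph (G.induce Sᶜ) → v ∈ S := by
  intro S hcard hblock
  by_contra hvS
  have hle : Fintype.card (Fin (k + 1)) ≤ S.ncard :=
    Set.card_le_ncard_of_forall_inter_nonempty S.toFinite (fun i j hij => (hpair i j hij).subset)
      hvS fun i => hblock.inter_nonempty_of_isObstruction (hobs i)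
  simp only [Fintype.card_fin] at hle
  omega

theorem stmt_13 {V : Type*} [Fintype V] (G : SimpleGraph V) (A : Set V)
    (hA : IsBlockGraph (G.induce Aᶜ)) (v : V) (k : ℕ)
    (O : Fin (k + 1) → Set V)
    (hobs : ∀ i, IsObstruction G (O i))
    (hv : ∀ i, v ∈ O i)
    (hpair : ∀ i j, i ≠ j → O i ∩ O j = {v}) :
    ∀ S : Set V, S.ncard ≤ k → IsBlockGraph (G.induce Sᶜ) → v ∈ S :=
  stmt_13_general G v k O hobs hpair
end
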